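/- For a smooth strictly positive ρ on 𝕋³, ∫_{𝕋³} ρ |∇² log ρ|² dx ≥ c ( ∫_{𝕋³} |∇²√ρ|² dx + ∫_{𝕋³} |∇ρ^{1/4}|⁴ dx ) for an absolute constant c > 0 (3-dimensional torus). -/

import Mathlib

open MeasureTheory
open scoped BigOperators

/-- Partial derivative in direction `i` of a scalar function on `ℝ³`. -/
noncomputable def pd (i : Fin 3) (f : (Fin 3 → ℝ) → ℝ) (x : Fin 3 → ℝ) : ℝ :=
  fderiv ℝ f x (Pi.single i 1)

/-!
Write `u = √ρ`. Pointwise, `ρ |∇² log ρ|² = 4 |∇²u - ∇u ⊗ ∇u / u|²`, `|∇ρ^{1/4}|⁴ = |∇u|⁴ / (16 u²)`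
and `|∇²u|² ≤ 2 |∇²u - ∇u ⊗ ∇u / u|² + 2 |∇u|⁴ / u²`, so everything reduces to bounding
`∫ |∇u|⁴ / u²` by `∫ |∇²u - ∇u ⊗ ∇u / u|²`. For this, integrate `div (|∇u|² ∇ log u)` over a
period cell, where it vanishes: its expansion is `2 |∇u|⁴ / u²` plus terms linear in
`∇²u - ∇u ⊗ ∇u / u`, which Cauchy–Schwarz and Young's inequality absorb.
-/

open Set

section HessianAlgebra

variable {ι : Type*} [Fintype ι] (p : ι → ℝ) (q : ι → ι → ℝ) (v : ℝ)

/-- `div (|∇u|² ∇ log u)` in terms of `p = ∇u`, `q = ∇²u` and `v = 1 / u`. -/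
noncomputable def divGradSqGradLog : ℝ :=
  ∑ i, (2 * (∑ j, p j * q i j) * (p i * v) + (∑ j, p j ^ 2) * ((q i i - p i * p i * v) * v))

theorem sum_sum_sq_mul_mul_eq :
    ∑ i, ∑ j, (p i * p j * v) ^ 2 = ((∑ i, p i ^ 2) * v) ^ 2 := by
  simp only [mul_pow, ← Finset.sum_mul, ← Finset.mul_sum, sq (∑ i, p i ^ 2)]

theorem sum_sum_sq_le_two_mul_add :
    ∑ i, ∑ j, q i j ^ 2
      ≤ 2 * ∑ i, ∑ j, (q i j - p i * p j * v) ^ 2 + 2 * ((∑ i, p i ^ 2) * v) ^ 2 := by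
  rw [← sum_sum_sq_mul_mul_eq, Finset.mul_sum, Finset.mul_sum, ← Finset.sum_add_distrib]
  refine Finset.sum_le_sum fun i _ => ?_
  rw [Finset.mul_sum, Finset.mul_sum, ← Finset.sum_add_distrib]
  exact Finset.sum_le_sum fun j _ => by nlinarith [sq_nonneg (q i j - 2 * (p i * p j * v))]

theorem divGradSqGradLog_eq :
    divGradSqGradLog p q v
      = 2 * ((∑ i, p i ^ 2) * v) ^ 2 + (∑ i, p i ^ 2) * v * ∑ i, (q i i - p i * p i * v)
        + 2 * ∑ i, ∑ j, (p i * p j * v) * (q i j - p i * p j * v) := by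
  rw [divGradSqGradLog, ← sum_sum_sq_mul_mul_eq]
  simp only [Finset.mul_sum, Finset.sum_mul, ← Finset.sum_add_distrib]
  refine Finset.sum_congr rfl fun i _ => Finset.sum_congr rfl fun j _ => ?_
  ring

theorem sq_sum_diag_le_card_mul (a : ι → ι → ℝ) :
    (∑ i, a i i) ^ 2 ≤ Fintype.card ι * ∑ i, ∑ j, a i j ^ 2 := by
  refine sq_sum_le_card_mul_sum_sq.trans (mul_le_mul_of_nonneg_left ?_ (Nat.cast_nonneg _))
  exact Finset.sum_le_sum fun i _ =>
    Finset.single_le_sum (f := fun j => a i j ^ 2) (fun j _ => sq_nonneg _) (Finset.mem_univ i)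

theorem sq_sum_sum_mul_le (a b : ι → ι → ℝ) :
    (∑ i, ∑ j, a i j * b i j) ^ 2 ≤ (∑ i, ∑ j, a i j ^ 2) * ∑ i, ∑ j, b i j ^ 2 := by
  simp only [← Fintype.sum_prod_type']
  exact Finset.sum_mul_sq_le_sq_mul_sq _ _ _

theorem sq_sum_sq_mul_le_divGradSqGradLog_add :
    ((∑ i, p i ^ 2) * v) ^ 2
      ≤ divGradSqGradLog p q v
        + (Fintype.card ι / 2 + 2) * ∑ i, ∑ j, (q i j - p i * p j * v) ^ 2 := by
  set a : ι → ι → ℝ := fun i j => q i j - p i * p j * v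
  set w := (∑ i, p i ^ 2) * v
  set S := ∑ i, ∑ j, a i j ^ 2
  have hS : 0 ≤ S := by positivity
  have htrace := sq_sum_diag_le_card_mul a
  have hcross := sq_sum_sum_mul_le (fun i j => p i * p j * v) a
  rw [sum_sum_sq_mul_mul_eq] at hcross
  rw [divGradSqGradLog_eq]
  set T := ∑ i, a i i
  set P := ∑ i, ∑ j, p i * p j * v * a i j
  -- Young: `w T ≥ -(w² + T²) / 2` with `T² ≤ card ι * S`,
  -- and `2 P ≥ -(w² / 2 + 2 S)` since `P² ≤ w² S`.
  have hP : -(w ^ 2 / 2 + 2 * S) ≤ 2 * P :=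
    (abs_le_of_sq_le_sq' (by nlinarith [sq_nonneg (w ^ 2 / 2 - 2 * S)]) (by positivity)).1
  nlinarith [sq_nonneg (w + T)]

end HessianAlgebra

def LatticePeriodic {n : ℕ} {β : Type*} (f : (Fin n → ℝ) → β) : Prop :=
  ∀ x i, f (x + Pi.single i 1) = f x

namespace LatticePeriodic

variable {n : ℕ} {β γ : Type*}

theorem comp {f : (Fin n → ℝ) → β} (hf : LatticePeriodic f) (g : β → γ) :
    LatticePeriodic (g ∘ f) := fun x i => congrArg g (hf x i)

theorem fderiv [NormedAddCommGroup β] [NormedSpace ℝ β] {f : (Fin n → ℝ) → β}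
    (hf : LatticePeriodic f) : LatticePeriodic (fderiv ℝ f) := fun x i => by
  rw [← fderiv_comp_add_right]
  exact congrArg (fun g => _root_.fderiv ℝ g x) (funext fun y => hf y i)

end LatticePeriodic

theorem Fin.insertNth_one_eq_insertNth_zero_add {n : ℕ} (i : Fin (n + 1)) (y : Fin n → ℝ) :
    i.insertNth (α := fun _ => ℝ) 1 y = i.insertNth 0 y + Pi.single i 1 := by
  rw [← Fin.insertNth_zero_right, ← Fin.insertNth_add, zero_add, add_zero]

theorem integral_sum_fderiv_single_eq_zero_of_latticePeriodic {n : ℕ}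
    (F : Fin (n + 1) → (Fin (n + 1) → ℝ) → ℝ) (hF : ∀ i, ContDiff ℝ 1 (F i))
    (hper : ∀ i, LatticePeriodic (F i)) :
    ∫ x in Icc (0 : Fin (n + 1) → ℝ) 1, ∑ i, fderiv ℝ (F i) x (Pi.single i 1) = 0 := by
  have hdiv_cont : Continuous fun x => ∑ i, fderiv ℝ (F i) x (Pi.single i 1) :=
    continuous_finsetSum _ fun i _ =>
      ((hF i).continuous_fderiv one_ne_zero).clm_apply continuous_const
  rw [integral_divergence_of_hasFDerivAt_off_countable' (a := 0) (b := 1) (fun _ => zero_le_one)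
    F (fun i x => fderiv ℝ (F i) x) ∅ countable_empty (fun i => (hF i).continuous.continuousOn)
    (fun x _ i => ((hF i).differentiable one_ne_zero x).hasFDerivAt)
    hdiv_cont.integrableOn_Icc]
  refine Finset.sum_eq_zero fun i _ => sub_eq_zero.2 <| setIntegral_congr_fun measurableSet_Icc
    fun y _ => ?_
  simp only [Pi.one_apply, Pi.zero_apply, Fin.insertNth_one_eq_insertNth_zero_add]
  exact hper i _ i

local notation "ℝ³" => Fin 3 → ℝ

section PartialDerivative

variable {f g : ℝ³ → ℝ} {x : ℝ³} (i : Fin 3)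

theorem HasFDerivAt.pd_eq {L : ℝ³ →L[ℝ] ℝ} (h : HasFDerivAt f L x) :
    pd i f x = L (Pi.single i 1) := by
  rw [pd, h.fderiv]

theorem ContDiff.continuous_pd {n : WithTop ℕ∞} (hf : ContDiff ℝ n f) (hn : n ≠ 0) :
    Continuous (pd i f) :=
  (hf.continuous_fderiv hn).clm_apply continuous_const

theorem ContDiff.pd {m n : WithTop ℕ∞} (hf : ContDiff ℝ n f) (hmn : m + 1 ≤ n) :
    ContDiff ℝ m (pd i f) :=
  (hf.fderiv_right hmn).clm_apply contDiff_const

theorem pd_const_mul (c : ℝ) (f : ℝ³ → ℝ) (x : ℝ³) :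
    pd i (fun y => c * f y) x = c * pd i f x := by
  change fderiv ℝ (c • f) x _ = _
  rw [fderiv_const_smul_field]
  rfl

theorem pd_mul (hf : DifferentiableAt ℝ f x) (hg : DifferentiableAt ℝ g x) :
    pd i (fun y => f y * g y) x = pd i f x * g x + f x * pd i g x := by
  rw [(hf.hasFDerivAt.fun_mul hg.hasFDerivAt).pd_eq, pd, pd]
  simp only [add_apply, smul_apply, smul_eq_mul]
  ring

theorem pd_inv (hf : DifferentiableAt ℝ f x) (hx : f x ≠ 0) :
    pd i (fun y => (f y)⁻¹) x = -pd i f x / f x ^ 2 := by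
  rw [HasFDerivAt.pd_eq (f := fun y => (f y)⁻¹) i
    ((hasDerivAt_inv hx).comp_hasFDerivAt x hf.hasFDerivAt), pd]
  simp only [smul_apply, smul_eq_mul]
  ring

theorem pd_log (hf : DifferentiableAt ℝ f x) (hx : f x ≠ 0) :
    pd i (fun y => Real.log (f y)) x = pd i f x / f x := by
  rw [(hf.hasFDerivAt.log hx).pd_eq, pd]
  simp only [smul_apply, smul_eq_mul]
  ring

theorem pd_sqrt (hf : DifferentiableAt ℝ f x) (hx : f x ≠ 0) :
    pd i (fun y => √(f y)) x = pd i f x / (2 * √(f x)) := by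
  rw [(hf.hasFDerivAt.sqrt hx).pd_eq, pd]
  simp only [smul_apply, smul_eq_mul]
  ring

theorem pd_sq (hf : DifferentiableAt ℝ f x) :
    pd i (fun y => f y ^ 2) x = 2 * f x * pd i f x := by
  simp only [sq]
  rw [pd_mul i hf hf]
  ring

theorem pd_sum {ι : Type*} (s : Finset ι) {A : ι → ℝ³ → ℝ}
    (hA : ∀ k ∈ s, DifferentiableAt ℝ (A k) x) :
    pd i (fun y => ∑ k ∈ s, A k y) x = ∑ k ∈ s, pd i (A k) x := by
  rw [(HasFDerivAt.fun_sum fun k hk => (hA k hk).hasFDerivAt).pd_eq]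
  simp only [sum_apply, pd]

theorem LatticePeriodic.pd (hf : LatticePeriodic f) : LatticePeriodic (pd i f) :=
  fun y k => congrArg (· (Pi.single i 1)) (hf.fderiv y k)

end PartialDerivative

section SquareRootHessian

variable {u : ℝ³ → ℝ}

theorem pd_pd_log (hu : ContDiff ℝ 2 u) (hu0 : ∀ x, u x ≠ 0) (i j : Fin 3) (x : ℝ³) :
    pd i (pd j fun y => Real.log (u y)) x
      = (pd i (pd j u) x - pd i u x * pd j u x / u x) / u x := by
  have hdiff : Differentiable ℝ u := hu.differentiable two_ne_zero
  have hlog : pd j (fun y => Real.log (u y)) = fun y => pd j u y * (u y)⁻¹ :=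
    funext fun y => (pd_log j (hdiff y) (hu0 y)).trans (div_eq_mul_inv _ _)
  rw [hlog, pd_mul (g := fun y => (u y)⁻¹) i
    ((hu.pd j (m := 1) le_rfl).differentiable one_ne_zero x) ((hdiff x).inv (hu0 x)),
    pd_inv i (hdiff x) (hu0 x)]
  field_simp [hu0 x]
  ring

theorem sum_pd_sum_sq_pd_mul_pd_log (hu : ContDiff ℝ 2 u) (hu0 : ∀ x, u x ≠ 0) (x : ℝ³) :
    ∑ i, pd i (fun y => (∑ j, pd j u y ^ 2) * pd i (fun z => Real.log (u z)) y) x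
      = divGradSqGradLog (fun i => pd i u x) (fun i j => pd i (pd j u) x) (u x)⁻¹ := by
  have hgrad : ∀ j, Differentiable ℝ (pd j u) := fun j =>
    (hu.pd j (m := 1) le_rfl).differentiable one_ne_zero
  refine Finset.sum_congr rfl fun i _ => ?_
  rw [pd_mul (f := fun y => ∑ j, pd j u y ^ 2) i
      (Differentiable.fun_sum fun j _ => (hgrad j).pow 2).differentiableAt
      (((hu.log hu0).pd i (m := 1) le_rfl).differentiable one_ne_zero x),
    pd_sum (A := fun j y => pd j u y ^ 2) i _ fun j _ => ((hgrad j).pow 2).differentiableAt,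
    pd_log i (hu.differentiable two_ne_zero x) (hu0 x), pd_pd_log hu hu0]
  simp only [pd_sq i (hgrad _ x), Finset.mul_sum, div_eq_mul_inv, mul_assoc]

theorem continuous_sum_sum_sq_pd_pd_sub (hu : ContDiff ℝ 2 u) (hu0 : ∀ x, u x ≠ 0) :
    Continuous fun x => ∑ i, ∑ j, (pd i (pd j u) x - pd i u x * pd j u x / u x) ^ 2 := by
  have := fun i j => (hu.pd j (m := 1) le_rfl).continuous_pd i one_ne_zero
  have := fun i => hu.continuous_pd i two_ne_zero
  have := hu.continuous
  fun_prop (disch := exact hu0)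

theorem continuous_sq_sum_sq_pd_div (hu : ContDiff ℝ 2 u) (hu0 : ∀ x, u x ≠ 0) :
    Continuous fun x => ((∑ i, pd i u x ^ 2) / u x) ^ 2 := by
  have := fun i => hu.continuous_pd i two_ne_zero
  have := hu.continuous
  fun_prop (disch := exact hu0)

theorem integral_sq_sum_sq_div_le (hu : ContDiff ℝ 2 u) (hu0 : ∀ x, u x ≠ 0)
    (hper : LatticePeriodic u) :
    ∫ x in Icc 0 1, ((∑ i, pd i u x ^ 2) / u x) ^ 2
      ≤ 7 / 2 * ∫ x in Icc 0 1, ∑ i, ∑ j, (pd i (pd j u) x - pd i u x * pd j u x / u x) ^ 2 := by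
  set F : Fin 3 → ℝ³ → ℝ := fun i y => (∑ j, pd j u y ^ 2) * pd i (fun z => Real.log (u z)) y
  have hF : ∀ i, ContDiff ℝ 1 (F i) := fun i =>
    (ContDiff.sum fun j _ => (hu.pd j le_rfl).pow 2).mul ((hu.log hu0).pd i le_rfl)
  have hlog : LatticePeriodic fun z => Real.log (u z) := hper.comp Real.log
  have hFper : ∀ i, LatticePeriodic (F i) := fun i y k => by
    simp only [F, (hper.pd _) y k, (hlog.pd i) y k]
  have hdiv : ∫ x in Icc 0 1, ∑ i, pd i (F i) x = 0 :=
    integral_sum_fderiv_single_eq_zero_of_latticePeriodic F hF hFper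
  have hS := continuous_sum_sum_sq_pd_pd_sub hu hu0
  have hw := continuous_sq_sum_sq_pd_div hu hu0
  have hdivF : Continuous fun x => ∑ i, pd i (F i) x := by
    have := fun i => (hF i).continuous_pd i one_ne_zero
    fun_prop
  have hpoint : ∀ x, ((∑ i, pd i u x ^ 2) / u x) ^ 2
      ≤ ∑ i, pd i (F i) x
        + 7 / 2 * ∑ i, ∑ j, (pd i (pd j u) x - pd i u x * pd j u x / u x) ^ 2 := fun x => by
    have h := sq_sum_sq_mul_le_divGradSqGradLog_add
      (fun i => pd i u x) (fun i j => pd i (pd j u) x) (u x)⁻¹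
    rw [← sum_pd_sum_sq_pd_mul_pd_log hu hu0] at h
    norm_num [div_eq_mul_inv] at h ⊢
    exact h
  calc ∫ x in Icc 0 1, ((∑ i, pd i u x ^ 2) / u x) ^ 2
      ≤ ∫ x in Icc 0 1, (∑ i, pd i (F i) x
          + 7 / 2 * ∑ i, ∑ j, (pd i (pd j u) x - pd i u x * pd j u x / u x) ^ 2) :=
        setIntegral_mono_on hw.integrableOn_Icc
          (hdivF.integrableOn_Icc.add (hS.integrableOn_Icc.const_mul _)) measurableSet_Icc
          fun x _ => hpoint x
    _ = 7 / 2 * ∫ x in Icc 0 1, ∑ i, ∑ j, (pd i (pd j u) x - pd i u x * pd j u x / u x) ^ 2 := by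
        rw [integral_add hdivF.integrableOn_Icc (hS.integrableOn_Icc.const_mul _), hdiv,
          integral_const_mul, zero_add]

theorem integral_sum_sum_sq_pd_pd_le (hu : ContDiff ℝ 2 u) (hu0 : ∀ x, u x ≠ 0) :
    ∫ x in Icc 0 1, ∑ i, ∑ j, pd i (pd j u) x ^ 2
      ≤ 2 * (∫ x in Icc 0 1, ∑ i, ∑ j, (pd i (pd j u) x - pd i u x * pd j u x / u x) ^ 2)
        + 2 * ∫ x in Icc 0 1, ((∑ i, pd i u x ^ 2) / u x) ^ 2 := by
  have hS := (continuous_sum_sum_sq_pd_pd_sub hu hu0).integrableOn_Icc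
    (μ := volume) (a := 0) (b := 1)
  have hw := (continuous_sq_sum_sq_pd_div hu hu0).integrableOn_Icc
    (μ := volume) (a := 0) (b := 1)
  have hQ : Continuous fun x => ∑ i, ∑ j, pd i (pd j u) x ^ 2 := by
    have := fun i j => (hu.pd j (m := 1) le_rfl).continuous_pd i one_ne_zero
    fun_prop
  rw [← integral_const_mul, ← integral_const_mul,
    ← integral_add (hS.const_mul _) (hw.const_mul _)]
  refine setIntegral_mono_on hQ.integrableOn_Icc ((hS.const_mul _).add (hw.const_mul _))
    measurableSet_Icc fun x _ => ?_
  simpa only [div_eq_mul_inv] using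
    sum_sum_sq_le_two_mul_add (fun i => pd i u x) (fun i j => pd i (pd j u) x) (u x)⁻¹

end SquareRootHessian

section Density

variable {ρ : ℝ³ → ℝ}

theorem mul_sum_sum_sq_pd_pd_log_eq (hρ : ContDiff ℝ 2 ρ) (hpos : ∀ x, 0 < ρ x) (x : ℝ³) :
    ρ x * ∑ i, ∑ j, pd i (pd j fun z => Real.log (ρ z)) x ^ 2
      = 4 * ∑ i, ∑ j, (pd i (pd j fun z => √(ρ z)) x
          - pd i (fun z => √(ρ z)) x * pd j (fun z => √(ρ z)) x / √(ρ x)) ^ 2 := by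
  have hu0 : ∀ x, √(ρ x) ≠ 0 := fun x => (Real.sqrt_pos.2 (hpos x)).ne'
  have hlog : (fun z => Real.log (ρ z)) = fun z => 2 * Real.log √(ρ z) := funext fun z => by
    rw [Real.log_sqrt (hpos z).le]
    ring
  have hpd : ∀ j, pd j (fun z => 2 * Real.log √(ρ z))
      = fun y => 2 * pd j (fun z => Real.log √(ρ z)) y := fun j => funext (pd_const_mul j 2 _)
  simp only [hlog, hpd, pd_const_mul, pd_pd_log (hρ.sqrt fun x => (hpos x).ne') hu0,
    Finset.mul_sum]
  refine Finset.sum_congr rfl fun i _ => Finset.sum_congr rfl fun j _ => ?_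
  have hρx := Real.sq_sqrt (hpos x).le
  have hs0 := hu0 x
  generalize √(ρ x) = s at hρx hs0 ⊢
  rw [← hρx]
  field_simp
  ring

theorem sq_sum_sq_pd_rpow_quarter_eq (hρ : ContDiff ℝ 1 ρ) (hpos : ∀ x, 0 < ρ x) (x : ℝ³) :
    (∑ i, pd i (fun z => ρ z ^ ((1 : ℝ) / 4)) x ^ 2) ^ 2
      = ((∑ i, pd i (fun z => √(ρ z)) x ^ 2) / √(ρ x)) ^ 2 / 16 := by
  have hu0 : ∀ x, √(ρ x) ≠ 0 := fun x => (Real.sqrt_pos.2 (hpos x)).ne'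
  have hquarter : (fun z => ρ z ^ ((1 : ℝ) / 4)) = fun z => √√(ρ z) := funext fun z => by
    rw [Real.sqrt_eq_rpow, Real.sqrt_eq_rpow, ← Real.rpow_mul (hpos z).le]
    norm_num
  have hu := hρ.sqrt fun x => (hpos x).ne'
  simp only [hquarter, pd_sqrt _ (hu.differentiable one_ne_zero x) (hu0 x), div_pow, mul_pow,
    Real.sq_sqrt (Real.sqrt_nonneg _)]
  rw [← Finset.sum_div]
  field_simp [hu0 x]
  ring

end Density

/-- Jüngel-type inequality on the torus (modeled by `ℤ³`-periodic smooth functions,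
with integrals over the fundamental cell `[0,1]³`): there is an absolute constant
`c > 0` such that
`∫ ρ |∇² log ρ|² ≥ c (∫ |∇²√ρ|² + ∫ |∇ρ^{1/4}|⁴)` for every smooth positive `ρ`. -/
theorem jungel_inequality :
    ∃ c > (0:ℝ), ∀ ρ : (Fin 3 → ℝ) → ℝ,
      ContDiff ℝ (⊤ : ℕ∞) ρ → (∀ x, 0 < ρ x) →
      (∀ (x : Fin 3 → ℝ) (i : Fin 3), ρ (x + Pi.single i 1) = ρ x) →
      (∫ x in Set.Icc (0 : Fin 3 → ℝ) 1,
          ρ x * ∑ i, ∑ j, (pd i (pd j (fun z => Real.log (ρ z))) x) ^ 2)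
        ≥ c * ((∫ x in Set.Icc (0 : Fin 3 → ℝ) 1,
              ∑ i, ∑ j, (pd i (pd j (fun z => Real.sqrt (ρ z))) x) ^ 2)
            + ∫ x in Set.Icc (0 : Fin 3 → ℝ) 1,
              (∑ i, (pd i (fun z => (ρ z) ^ ((1:ℝ)/4)) x) ^ 2) ^ 2) := by
  refine ⟨2 / 5, by norm_num, fun ρ hρ hpos hper => ?_⟩
  have hρ2 : ContDiff ℝ 2 ρ := hρ.of_le (WithTop.coe_le_coe.2 le_top)
  rw [setIntegral_congr_fun measurableSet_Icc fun x _ => mul_sum_sum_sq_pd_pd_log_eq hρ2 hpos x,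
    setIntegral_congr_fun measurableSet_Icc fun x _ =>
      sq_sum_sq_pd_rpow_quarter_eq (hρ2.of_le one_le_two) hpos x,
    integral_const_mul, integral_div]
  set u : ℝ³ → ℝ := fun z => √(ρ z)
  have hu : ContDiff ℝ 2 u := hρ2.sqrt fun x => (hpos x).ne'
  have hu0 : ∀ x, u x ≠ 0 := fun x => (Real.sqrt_pos.2 (hpos x)).ne'
  have hdefect := integral_sq_sum_sq_div_le hu hu0 (LatticePeriodic.comp hper Real.sqrt)
  have hhess := integral_sum_sum_sq_pd_pd_le hu hu0
  have hnonneg :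
      0 ≤ ∫ x in Icc 0 1, ∑ i, ∑ j, (pd i (pd j u) x - pd i u x * pd j u x / u x) ^ 2 :=
    setIntegral_nonneg measurableSet_Icc fun x _ => by positivity
  linarith
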